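/- Let m > k ≥ 1 be integers and suppose that no Sauer Matrix of size k is feasible for translations, i.e., for every Sauer Matrix S of size k there is no r ∈ [0,1)^k such that r+S is totally 1-submodular. Then for every t ∈ [0,1)^m \ {0} and every A ∈ {-1,0,1}^{m×n} with pairwise distinct columns such that t+A is totally 1-submodular, one has n ≤ 2·(C(m,0)+C(m,1)+…+C(m,k−1)); that is, h_s(m) ≤ 2·Σ_{i=0}^{k−1} C(m,i). -/

import Mathlib

open Matrix

/-- Every `k×k` minor of `A` is at most `c` in absolute value. -/
def MinorsLE {m n : ℕ} (k : ℕ) (A : Matrix (Fin m) (Fin n) ℝ) (c : ℝ) : Prop :=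
  ∀ (f : Fin k ↪ Fin m) (g : Fin k ↪ Fin n), |(A.submatrix f g).det| ≤ c

/-- `A` is totally 1-submodular: all its minors, of any size, are at most `1`
in absolute value. -/
def Totally1Submodular {m n : ℕ} (A : Matrix (Fin m) (Fin n) ℝ) : Prop :=
  ∀ k : ℕ, MinorsLE k A 1

/-- The shifted matrix `t + A`, whose columns are `t + A_j`. -/
def shiftMat {m n : ℕ} (t : Fin m → ℝ) (A : Matrix (Fin m) (Fin n) ℝ) :
    Matrix (Fin m) (Fin n) ℝ :=
  Matrix.of fun i j => t i + A i j

/-- All entries of `A` lie in `{-1, 0, 1}`. -/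
def SignEntries {m n : ℕ} (A : Matrix (Fin m) (Fin n) ℝ) : Prop :=
  ∀ i j, A i j = -1 ∨ A i j = 0 ∨ A i j = 1

/-- The data admissible for the shifted Heller constant `h_s(m)`: a translation vector
`t ∈ [0,1)^m \ {0}` and a matrix `A ∈ {-1,0,1}^{m×n}` with pairwise distinct columns
such that `t + A` is totally 1-submodular. -/
def ShiftedAdmissible (m n : ℕ) (t : Fin m → ℝ) (A : Matrix (Fin m) (Fin n) ℝ) : Prop :=
  (∀ i, 0 ≤ t i ∧ t i < 1) ∧ t ≠ 0 ∧ SignEntries A ∧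
    Function.Injective A.transpose ∧ Totally1Submodular (shiftMat t A)

/-- A Sauer Matrix of size `k`: a `{-1,0,1}`-matrix of format `k × 2^k` having, for each
subset `E ⊆ {1,…,k}`, exactly one column whose support equals `E`. -/
def IsSauer {k : ℕ} (S : Matrix (Fin k) (Fin (2 ^ k)) ℝ) : Prop :=
  SignEntries S ∧ ∀ E : Set (Fin k), ∃! j : Fin (2 ^ k), ∀ i, S i j ≠ 0 ↔ i ∈ E

/-!
On a row with `t i > 0`, the `1×1` minor `|t i + a| ≤ 1` forbids the entry `a = 1`, so there a
column is determined by its support. On the rows with `t i = 0`, two distinct columns with the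
same support differ somewhere, with opposite nonzero signs, and then the `2×2` minors force them
to be opposite on all those rows. Hence every support occurs at most twice. The family of supports
shatters no `k`-set: choosing, for each subset of a shattered `k`-set, a column cutting it out,
gives a Sauer Matrix whose shift by the restriction of `t` is a submatrix of `t + A`. The
Sauer–Shelah lemma now bounds the number of supports.
-/

open Finset

theorem Finset.card_le_sum_choose_of_forall_not_shatters {α : Type*} [Fintype α] [DecidableEq α]
    {𝒜 : Finset (Finset α)} {k : ℕ} (h : ∀ s : Finset α, #s = k → ¬ 𝒜.Shatters s) :
    #𝒜 ≤ ∑ i ∈ range k, (Fintype.card α).choose i := by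
  simp_rw [← card_univ, ← card_powersetCard]
  refine (card_le_card_shatterer 𝒜).trans <|
    (card_le_card fun s hs ↦ mem_biUnion.2 ⟨#s, ?_⟩).trans card_biUnion_le
  refine ⟨mem_range.2 ?_, mem_powersetCard_univ.2 rfl⟩
  by_contra! hks
  obtain ⟨u, hus, huk⟩ := exists_subset_card_eq hks
  exact h u huk ((mem_shatterer.1 hs).mono_right hus)

section

variable {m n : ℕ}

namespace Totally1Submodular

variable {B : Matrix (Fin m) (Fin n) ℝ}

theorem abs_apply_le_one (h : Totally1Submodular B) (i : Fin m) (j : Fin n) : |B i j| ≤ 1 := by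
  have h1 := h 1 ⟨fun _ ↦ i, fun _ _ _ ↦ Subsingleton.elim _ _⟩
    ⟨fun _ ↦ j, fun _ _ _ ↦ Subsingleton.elim _ _⟩
  rwa [Matrix.det_fin_one] at h1

theorem abs_det_two_le_one (h : Totally1Submodular B) {i i' : Fin m} {j j' : Fin n}
    (hi : i ≠ i') (hj : j ≠ j') : |B i j * B i' j' - B i j' * B i' j| ≤ 1 := by
  have h2 :=
    h 2 ⟨![i, i'], injective_pair_iff_ne.2 hi⟩ ⟨![j, j'], injective_pair_iff_ne.2 hj⟩
  rwa [Matrix.det_fin_two] at h2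

theorem submatrix {k l : ℕ} (h : Totally1Submodular B) (f : Fin k ↪ Fin m)
    (g : Fin l ↪ Fin n) : Totally1Submodular (B.submatrix f g) :=
  fun p f' g' ↦ h p (f'.trans f) (g'.trans g)

end Totally1Submodular

namespace SignEntries

variable {A : Matrix (Fin m) (Fin n) ℝ}

theorem abs_apply_eq_one (h : SignEntries A) {i : Fin m} {j : Fin n} (hij : A i j ≠ 0) :
    |A i j| = 1 := by
  rcases h i j with h | h | h <;> simp_all

theorem apply_eq_neg_of_ne (h : SignEntries A) {i : Fin m} {j j' : Fin n}
    (hz : A i j = 0 ↔ A i j' = 0) (hne : A i j ≠ A i j') : A i j' = -A i j := by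
  rcases h i j with h1 | h1 | h1 <;> rcases h i j' with h2 | h2 | h2 <;> simp_all

end SignEntries

noncomputable def colSupport (A : Matrix (Fin m) (Fin n) ℝ) (j : Fin n) : Finset (Fin m) :=
  {i | A i j ≠ 0}

@[simp]
theorem mem_colSupport {A : Matrix (Fin m) (Fin n) ℝ} {i : Fin m} {j : Fin n} :
    i ∈ colSupport A j ↔ A i j ≠ 0 := by
  simp [colSupport]

variable {t : Fin m → ℝ} {A : Matrix (Fin m) (Fin n) ℝ}

theorem apply_eq_neg_one_of_pos (hsign : SignEntries A) (hT : Totally1Submodular (shiftMat t A))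
    {i : Fin m} {j : Fin n} (ht : 0 < t i) (hij : A i j ≠ 0) : A i j = -1 := by
  have := (abs_le.1 (hT.abs_apply_le_one i j)).2
  rcases hsign i j with h | h | h
  · exact h
  · exact absurd h hij
  · simp only [shiftMat, Matrix.of_apply, h] at this
    linarith

theorem apply_eq_of_colSupport_eq_of_pos (hsign : SignEntries A)
    (hT : Totally1Submodular (shiftMat t A)) {j j' : Fin n}
    (hs : colSupport A j = colSupport A j') {i : Fin m} (ht : 0 < t i) : A i j = A i j' := by
  have hmem : A i j ≠ 0 ↔ A i j' ≠ 0 := by simpa using congr(i ∈ $hs)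
  by_cases hij : A i j = 0
  · rw [hij, eq_comm]
    simpa [hij] using hmem
  · rw [apply_eq_neg_one_of_pos hsign hT ht hij,
      apply_eq_neg_one_of_pos hsign hT ht (hmem.1 hij)]

theorem apply_eq_neg_of_colSupport_eq_of_eq_zero (ht : ∀ i, 0 ≤ t i) (hsign : SignEntries A)
    (hinj : Function.Injective Aᵀ) (hT : Totally1Submodular (shiftMat t A)) {j j' : Fin n}
    (hjj' : j ≠ j') (hs : colSupport A j = colSupport A j') {i : Fin m} (hti : t i = 0) :
    A i j' = -A i j := by
  have hz : ∀ a, A a j = 0 ↔ A a j' = 0 := fun a ↦ by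
    simpa [not_iff_not] using congr(a ∈ $hs)
  obtain ⟨i₀, hi₀⟩ : ∃ i₀, A i₀ j ≠ A i₀ j' := by
    by_contra! h
    exact hjj' (hinj (funext h))
  have hti₀ : t i₀ = 0 := by
    by_contra h
    exact hi₀ (apply_eq_of_colSupport_eq_of_pos hsign hT hs ((ht i₀).lt_of_ne' h))
  have hi₀j' : A i₀ j' = -A i₀ j := hsign.apply_eq_neg_of_ne (hz i₀) hi₀
  have hi₀j : A i₀ j ≠ 0 := fun h ↦ hi₀ (by rw [hi₀j', h, neg_zero])
  by_cases hne : A i j = A i j'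
  · by_cases hij : A i j = 0
    · rw [← hne, hij, neg_zero]
    -- Otherwise the `2×2` minor on rows `i₀, i` and columns `j, j'` would be `±2`.
    have hii₀ : i₀ ≠ i := by rintro rfl; exact hi₀ hne
    have h2 := hT.abs_det_two_le_one hii₀ hjj'
    simp only [shiftMat, Matrix.of_apply, hti, hti₀, zero_add, hi₀j', ← hne] at h2
    have : |A i₀ j * A i j - -A i₀ j * A i j| = 2 := by
      rw [show A i₀ j * A i j - -A i₀ j * A i j = 2 * (A i₀ j * A i j) by ring, abs_mul,
        abs_mul, hsign.abs_apply_eq_one hi₀j, hsign.abs_apply_eq_one hij]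
      norm_num
    linarith
  · exact hsign.apply_eq_neg_of_ne (hz i) hne

theorem card_filter_colSupport_eq_le_two (ht : ∀ i, 0 ≤ t i) (hsign : SignEntries A)
    (hinj : Function.Injective Aᵀ) (hT : Totally1Submodular (shiftMat t A)) (F : Finset (Fin m)) :
    #{j | colSupport A j = F} ≤ 2 := by
  by_contra! h
  obtain ⟨a, ha, b, hb, c, hc, hab, hac, hbc⟩ := two_lt_card.1 h
  simp only [mem_filter, mem_univ, true_and] at ha hb hc
  refine hbc (hinj (funext fun i ↦ ?_))
  rcases (ht i).lt_or_eq with hti | hti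
  · exact apply_eq_of_colSupport_eq_of_pos hsign hT (hb.trans hc.symm) hti
  · rw [Matrix.transpose_apply, Matrix.transpose_apply,
      apply_eq_neg_of_colSupport_eq_of_eq_zero ht hsign hinj hT hab (ha.trans hb.symm) hti.symm,
      apply_eq_neg_of_colSupport_eq_of_eq_zero ht hsign hinj hT hac (ha.trans hc.symm) hti.symm]

theorem card_le_two_mul_card_image_colSupport (ht : ∀ i, 0 ≤ t i) (hsign : SignEntries A)
    (hinj : Function.Injective Aᵀ) (hT : Totally1Submodular (shiftMat t A)) :
    n ≤ 2 * #(univ.image (colSupport A)) := by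
  simpa using card_le_mul_card_image univ 2 fun F _ ↦
    card_filter_colSupport_eq_le_two ht hsign hinj hT F

theorem isSauer_of_support_equiv {k : ℕ} {S : Matrix (Fin k) (Fin (2 ^ k)) ℝ}
    (hsign : SignEntries S) (e : Fin (2 ^ k) ≃ Finset (Fin k))
    (hS : ∀ i j, S i j ≠ 0 ↔ i ∈ e j) : IsSauer S := by
  classical
  refine ⟨hsign, fun E ↦ ⟨e.symm {i | i ∈ E}, fun i ↦ by simp [hS], fun j hj ↦ ?_⟩⟩
  rw [Equiv.eq_symm_apply]
  ext i
  simp [← hS, hj]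

theorem not_shatters_image_colSupport {k : ℕ}
    (hSauer : ∀ S : Matrix (Fin k) (Fin (2 ^ k)) ℝ, IsSauer S →
      ∀ r : Fin k → ℝ, (∀ i, 0 ≤ r i ∧ r i < 1) → ¬ Totally1Submodular (shiftMat r S))
    (ht : ∀ i, 0 ≤ t i ∧ t i < 1) (hsign : SignEntries A)
    (hT : Totally1Submodular (shiftMat t A)) {s : Finset (Fin m)} (hs : #s = k) :
    ¬ (univ.image (colSupport A)).Shatters s := by
  intro hsh
  let ι := (s.orderEmbOfFin hs).toEmbedding
  obtain ⟨c, hc⟩ :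
      ∃ c : Finset (Fin k) → Fin n, ∀ E, s ∩ colSupport A (c E) = E.map ι := by
    choose u hu hsu using fun E : Finset (Fin k) ↦ hsh (t := E.map ι) fun _ hx ↦ by
      obtain ⟨y, -, rfl⟩ := mem_map.1 hx
      exact s.orderEmbOfFin_mem hs y
    choose c hc using fun E ↦ mem_image.1 (hu E)
    exact ⟨fun E ↦ c E, fun E ↦ (hc E).2 ▸ hsu E⟩
  have hcol (E : Finset (Fin k)) (i : Fin k) : ι i ∈ colSupport A (c E) ↔ i ∈ E := by
    rw [← mem_map' ι, ← hc, mem_inter]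
    exact (and_iff_right (s.orderEmbOfFin_mem hs i)).symm
  have hc_inj : Function.Injective c := fun E E' h ↦ by
    ext i
    rw [← hcol, h, hcol]
  let e : Fin (2 ^ k) ≃ Finset (Fin k) := Fintype.equivFinOfCardEq (by simp) |>.symm
  let g : Fin (2 ^ k) ↪ Fin n := ⟨c ∘ e, hc_inj.comp e.injective⟩
  have hSauerS : IsSauer (A.submatrix ι g) :=
    isSauer_of_support_equiv (fun i j ↦ hsign _ _) e fun i j ↦ by
      simpa [g] using hcol (e j) i
  exact hSauer _ hSauerS (t ∘ ι) (fun i ↦ ht (ι i)) (hT.submatrix ι g)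

end

theorem stmt11_general (m k : ℕ)
    (hSauer : ∀ S : Matrix (Fin k) (Fin (2 ^ k)) ℝ, IsSauer S →
      ∀ r : Fin k → ℝ, (∀ i, 0 ≤ r i ∧ r i < 1) → ¬ Totally1Submodular (shiftMat r S))
    (n : ℕ) (t : Fin m → ℝ) (A : Matrix (Fin m) (Fin n) ℝ)
    (hadm : ShiftedAdmissible m n t A) :
    n ≤ 2 * ∑ i ∈ Finset.range k, m.choose i := by
  obtain ⟨ht, -, hsign, hinj, hT⟩ := hadm
  calc n ≤ 2 * #(univ.image (colSupport A)) :=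
        card_le_two_mul_card_image_colSupport (fun i ↦ (ht i).1) hsign hinj hT
    _ ≤ 2 * ∑ i ∈ range k, m.choose i := by
        gcongr
        simpa using card_le_sum_choose_of_forall_not_shatters fun s hs ↦
          not_shatters_image_colSupport hSauer ht hsign hT hs

theorem stmt11 (m k : ℕ) (hk : 1 ≤ k) (hmk : k < m)
    (hSauer : ∀ S : Matrix (Fin k) (Fin (2 ^ k)) ℝ, IsSauer S →
      ∀ r : Fin k → ℝ, (∀ i, 0 ≤ r i ∧ r i < 1) → ¬ Totally1Submodular (shiftMat r S))
    (n : ℕ) (t : Fin m → ℝ) (A : Matrix (Fin m) (Fin n) ℝ)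
    (hadm : ShiftedAdmissible m n t A) :
    n ≤ 2 * ∑ i ∈ Finset.range k, m.choose i :=
  stmt11_general m k hSauer n t A hadm
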